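/- arXiv:2406.12781 — 2 statements merged into one kernel-verified Lean document; each statement's English description precedes it below -/
import Mathlib

section
/- Star Toeplitz–Hankel decomposition: For any symbols a, b ∈ V, the star-Toeplitz and star-Hankel operators satisfy T(a⋆b) = T(a)T(b) + H(a)H(b^∼) as bounded operators on ℓ²(ℕ); equivalently, for all j,k ≥ 1, T_{j,k}(a⋆b) = ∑_{l≥1} T_{j,l}(a)T_{l,k}(b) + ∑_{l≥1} H_{j,l}(a)H_{l,k}(b^∼), with both series absolutely convergent. -/
open Filter MeasureTheory

noncomputable section

/-- A symbol `a`, where `a k` is the circle function `a_{k/2}` at half-integer `x = k/2`. -/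
abbrev Symb := ℤ → ℂ → ℂ

/-- `m`-th Fourier coefficient of a function on the unit circle. -/
def fCoef (f : ℂ → ℂ) (m : ℤ) : ℂ :=
  (2 * (Real.pi : ℂ))⁻¹ * ∫ p in (-Real.pi)..Real.pi,
    f (Complex.exp (Complex.I * (p : ℂ))) * Complex.exp (-(Complex.I * (m : ℂ) * (p : ℂ)))

/-- Matrix element `L_{j,k}(a) = (a_{(j+k)/2})_{j-k}` of the star-Laurent operator. -/
def Lmat (a : Symb) (j k : ℤ) : ℂ := fCoef (a (j + k)) (j - k)

/-- The annulus `ρ < |z| < ρ⁻¹`. -/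
def annulus (ρ : ℝ) : Set ℂ := {z : ℂ | ρ < ‖z‖ ∧ ‖z‖ < ρ⁻¹}

/-- Membership in `V_ρ`: analytic extension to the annulus, uniformly bounded in `x`. -/
def memVrho (ρ : ℝ) (a : Symb) : Prop :=
  (∀ k : ℤ, AnalyticOnNhd ℂ (a k) (annulus ρ)) ∧
    ∃ M : ℝ, ∀ (k : ℤ), ∀ z ∈ annulus ρ, ‖a k z‖ ≤ M

/-- Membership in `V = ⋃_{ρ ∈ (0,1)} V_ρ`. -/
def memV (a : Symb) : Prop := ∃ ρ : ℝ, ρ ∈ Set.Ioo (0 : ℝ) 1 ∧ memVrho ρ a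

/-- The Moyal star product of two symbols. -/
def starProd (a b : Symb) : Symb := fun x z =>
  ∑' mn : ℤ × ℤ, z ^ (mn.1 + mn.2) * fCoef (a (x + mn.1)) mn.2 * fCoef (b (x - mn.2)) mn.1

/-- Two symbols are equivalent if they generate the same star-Laurent matrix. -/
def symbolEquiv (a b : Symb) : Prop := ∀ j k : ℤ, Lmat a j k = Lmat b j k

/-- The unit symbol. -/
def oneSymbol : Symb := fun _ _ => 1

/-- `+` symbols: the star-Laurent matrix is lower triangular. -/
def isPlus (a : Symb) : Prop := ∀ j k : ℤ, j < k → Lmat a j k = 0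

/-- `-` symbols: the star-Laurent matrix is upper triangular. -/
def isMinus (a : Symb) : Prop := ∀ j k : ℤ, k < j → Lmat a j k = 0

/-- Matrix element of the star-Toeplitz operator (meaningful for `j, k ≥ 1`). -/
def Tmat (a : Symb) (j k : ℕ) : ℂ := Lmat a (j : ℤ) (k : ℤ)

/-- Matrix element of the star-Hankel operator (meaningful for `j, k ≥ 1`). -/
def Hmat (a : Symb) (j k : ℕ) : ℂ := fCoef (a ((j : ℤ) - k + 1)) ((j : ℤ) + k - 1)

/-- The `n × n` star-Toeplitz matrix. -/
def Tn (a : Symb) (n : ℕ) : Matrix (Fin n) (Fin n) ℂ :=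
  Matrix.of fun j k : Fin n => Lmat a ((j : ℤ) + 1) ((k : ℤ) + 1)

/-- The reflected symbol `(a^∼)_x(z) = a_{1-x}(z⁻¹)`. -/
def reflect (a : Symb) : Symb := fun x z => a (2 - x) z⁻¹

/-- Pointwise difference of symbols. -/
def subSym (a b : Symb) : Symb := fun x z => a x z - b x z

/-- Pointwise scalar multiple of a symbol. -/
def smulSym (c : ℂ) (a : Symb) : Symb := fun x z => c * a x z

/-- Star powers of a symbol. -/
def starPow (a : Symb) : ℕ → Symb
  | 0 => oneSymbol
  | n + 1 => starProd a (starPow a n)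

/-- The star exponential of a symbol. -/
def expStar (a : Symb) : Symb := fun x z =>
  ∑' n : ℕ, ((Nat.factorial n : ℂ))⁻¹ * starPow a n x z

/-- `b` is a star logarithm in `V` of `a`. -/
def IsStarLog (b a : Symb) : Prop := memV b ∧ symbolEquiv (expStar b) a

/-- `b` is a star inverse of `a`. -/
def IsStarInv (a b : Symb) : Prop :=
  symbolEquiv (starProd a b) oneSymbol ∧ symbolEquiv (starProd b a) oneSymbol

/-- The symbol `(x, z) ↦ z^n`. -/
def zpowSym (n : ℤ) : Symb := fun _ z => z ^ n

/-- The Moyal bracket `{c, d}_M = -i (c ⋆ d - d ⋆ c)`. -/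
def moyalBracket (c d : Symb) : Symb := fun x z =>
  -Complex.I * (starProd c d x z - starProd d c x z)

/-- `a` has zero star winding number: it admits left and right Wiener-Hopf star
factorizations with `±` factors in `V` whose star logarithms exist in `V`. -/
def HasZeroStarWinding (a : Symb) : Prop :=
  ∃ aLp aLm aRm aRp bLp bLm bRm bRp : Symb,
    isPlus aLp ∧ isMinus aLm ∧ isMinus aRm ∧ isPlus aRp ∧
    memV aLp ∧ memV aLm ∧ memV aRm ∧ memV aRp ∧
    IsStarLog bLp aLp ∧ IsStarLog bLm aLm ∧ IsStarLog bRm aRm ∧ IsStarLog bRp aRp ∧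
    symbolEquiv a (starProd aLp aLm) ∧ symbolEquiv a (starProd aRm aRp)

/-- Operator norm of an infinite matrix, as the least constant `C` with
`‖A v‖₂ ≤ C ‖v‖₂` for finitely supported `v`. -/
def matOpNorm {ι κ : Type*} (A : ι → κ → ℂ) : ℝ :=
  sInf {C : ℝ | 0 ≤ C ∧ ∀ v : κ →₀ ℂ,
    ∑' j : ι, ‖∑ k ∈ v.support, A j k * v k‖ ^ 2 ≤ C ^ 2 * ∑ k ∈ v.support, ‖v k‖ ^ 2}

/-- The matrix of `P̃_n A P̃_n`. -/
def PAP (n : ℕ) (A : ℤ → ℤ → ℂ) : ℤ → ℤ → ℂ := fun j k =>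
  if |j| ≤ (n : ℤ) ∧ |k| ≤ (n : ℤ) then A j k else 0

/-- The matrix of `P̃_n A Q̃_m`. -/
def PAQ (n m : ℕ) (A : ℤ → ℤ → ℂ) : ℤ → ℤ → ℂ := fun j k =>
  if |j| ≤ (n : ℤ) ∧ ¬ |k| ≤ (m : ℤ) then A j k else 0

/-- The matrix of `Q̃_m A P̃_n`. -/
def QAP (m n : ℕ) (A : ℤ → ℤ → ℂ) : ℤ → ℤ → ℂ := fun j k =>
  if ¬ |j| ≤ (m : ℤ) ∧ |k| ≤ (n : ℤ) then A j k else 0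

/-- The localization norm `‖a‖_loc = ∑_{n≥0} 2^{-(n+1)} ‖P̃_n L(a) P̃_n‖`. -/
def locNorm (a : Symb) : ℝ :=
  ∑' n : ℕ, ((2 : ℝ))⁻¹ ^ (n + 1) * matOpNorm (PAP n (Lmat a))

/-- The operator exponential `e^T` applied to a symbol, via the power series. -/
def opExp (T : Symb → Symb) : Symb → Symb := fun d x z =>
  ∑' n : ℕ, ((Nat.factorial n : ℂ))⁻¹ * (T^[n] d) x z

/-- Taylor coefficients of `ψ₁(x) = 2x (x log x + 1 - x)/(x-1)²` around `x = 1`. -/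
def psi1Coef : ℕ → ℂ := fun j =>
  if j = 0 then 1 else 4 * (-1) ^ (j + 1) / ((j : ℂ) * ((j : ℂ) + 1) * ((j : ℂ) + 2))

/-- `ψ₁` of an operator, applied to a symbol, via the power series around the identity. -/
def opPsi1 (T : Symb → Symb) : Symb → Symb := fun d x z =>
  ∑' n : ℕ, psi1Coef n * ((fun e : Symb => fun x' z' => T e x' z' - e x' z')^[n] d) x z

/-- The operator `α • 𝓜(c)`, where `𝓜(c) d = {c,d}_M` is the Moyal adjoint action. -/
def MopS (c : Symb) (α : ℂ) : Symb → Symb := fun e => smulSym α (moyalBracket c e)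

/-- `Φ_BCH(c,d)` of the paper. -/
def PhiBCH (c d : Symb) : Symb := fun x z =>
  (∫ t in (0:ℝ)..(1:ℝ), ∫ s in (0:ℝ)..(1:ℝ),
      (opExp (MopS c (-Complex.I * (s : ℂ)))
        ((opPsi1 (fun e => opExp (MopS c Complex.I) (opExp (MopS d (Complex.I * (t : ℂ))) e))) d)) x z)
  - (∫ t in (0:ℝ)..(1:ℝ), ∫ s in (0:ℝ)..t,
      (opExp (MopS c (Complex.I * (s : ℂ)))
        (opExp (MopS d Complex.I)
          ((opPsi1 (fun e => opExp (MopS d (-Complex.I)) (opExp (MopS c (-Complex.I * (t : ℂ))) e))) c))) x z)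

/-- The pair `(c,d)` belongs to `S_Φ`. -/
def memSPhi (c d : Symb) : Prop :=
  ∃ (F : ℕ → Symb) (ε : ℝ), 0 < ε ∧
    (∀ ν : ℝ, |ν - 1| < ε → Summable (fun n : ℕ => matOpNorm (Lmat (F n)) * |ν| ^ n)) ∧
    (∀ ν : ℝ, |ν - 1| < ε → memV (fun x z => ∑' n : ℕ, (ν : ℂ) ^ n * F n x z)) ∧
    (∀ ν : ℝ, |ν - 1| < ε →
      symbolEquiv (PhiBCH (smulSym (ν : ℂ) c) (smulSym (ν : ℂ) d))
        (fun x z => ∑' n : ℕ, (ν : ℂ) ^ (n + 1) * F n x z))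

/-- A sequence of symbols regularizes `a` (Definition 3.13). -/
def Regularizes (A : ℕ → Symb) (a : Symb) : Prop :=
  Filter.Tendsto (fun k => locNorm (subSym (A k) a)) Filter.atTop (nhds 0) ∧
  ∃ (aLp aLm aRm aRp bLp bLm bRm bRp : ℕ → Symb) (ρ M : ℝ), ρ ∈ Set.Ioo (0:ℝ) 1 ∧
    (∀ k, isPlus (aLp k) ∧ isMinus (aLm k) ∧ isMinus (aRm k) ∧ isPlus (aRp k)) ∧
    (∀ k, memV (aLp k) ∧ memV (aLm k) ∧ memV (aRm k) ∧ memV (aRp k)) ∧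
    (∀ k, symbolEquiv (A k) (starProd (aLp k) (aLm k)) ∧
          symbolEquiv (A k) (starProd (aRm k) (aRp k))) ∧
    (∀ k, symbolEquiv (expStar (bLp k)) (aLp k) ∧ symbolEquiv (expStar (bLm k)) (aLm k) ∧
          symbolEquiv (expStar (bRm k)) (aRm k) ∧ symbolEquiv (expStar (bRp k)) (aRp k)) ∧
    (∀ k, memVrho ρ (bLp k) ∧ memVrho ρ (bLm k) ∧ memVrho ρ (bRm k) ∧ memVrho ρ (bRp k)) ∧
    (∀ k, ∀ b : Symb, (b = bLp k ∨ b = bLm k ∨ b = bRm k ∨ b = bRp k) →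
        ∀ (j : ℤ), ∀ z ∈ annulus ρ, ‖b j z‖ ≤ M) ∧
    (∀ k, memSPhi (bLp k) (bLm k) ∧ memSPhi (bRm k) (bRp k)) ∧
    (∀ k, ∀ b : Symb, (b = bLp k ∨ b = bLm k ∨ b = bRm k ∨ b = bRp k) →
        Summable (fun jl : ℕ × ℕ => ‖Tmat b (jl.1 + 1) (jl.2 + 1)‖))

/-- `a` admits a regularisation. -/
def IsRegularizable (a : Symb) : Prop := ∃ A : ℕ → Symb, Regularizes A a

/-- The boundary term `E_x^{R/L}` of the strong Szegő-type theorem; `k = 2x`. -/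
def Eterm (bp bm dm dp : Symb) (k : ℤ) : ℂ :=
  (1/2 : ℂ) * ∑' m : ℕ, ∑ j ∈ Finset.Icc 1 (m + 1),
    (fCoef (bp (k + 2*(j:ℤ) - ((m:ℤ) + 2))) ((m:ℤ) + 1) *
        fCoef (dm (k + 2*(j:ℤ) - ((m:ℤ) + 2))) (-((m:ℤ) + 1)) +
      fCoef (dp (k + 2*(j:ℤ) - ((m:ℤ) + 2))) ((m:ℤ) + 1) *
        fCoef (bm (k + 2*(j:ℤ) - ((m:ℤ) + 2))) (-((m:ℤ) + 1)))

/-- `T(cinv)` is a two-sided (matrix) inverse of `T(c)` on `ℓ²(ℕ)`. -/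
def TmatTwoSidedInverse (c cinv : Symb) : Prop :=
  ∀ j k : ℕ, 1 ≤ j → 1 ≤ k →
    (∑' l : ℕ, Tmat c j (l + 1) * Tmat cinv (l + 1) k) = (if j = k then 1 else 0) ∧
    (∑' l : ℕ, Tmat cinv j (l + 1) * Tmat c (l + 1) k) = (if j = k then 1 else 0)
-- ### block D : functions on ℝ × (strip) representing symbols

/-- The horizontal strip `log ρ < Im z < -log ρ` in the complex plane. -/
def strip (ρ : ℝ) : Set ℂ := {z : ℂ | Real.log ρ < z.im ∧ z.im < -Real.log ρ}

/-- `a = [F]`: the function `F` on `ℝ × (ℝ/2πℤ)` represents the symbol `a`. -/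
def RepBy (a : Symb) (F : ℝ → ℂ → ℂ) : Prop :=
  ∀ k m : ℤ, (k + m) % 2 = 0 →
    fCoef (a k) m = (2 * (Real.pi : ℂ))⁻¹ *
      ∫ p in (-Real.pi)..Real.pi, F ((k : ℝ) / 2) (p : ℂ) * Complex.exp (-(Complex.I * (m : ℂ) * (p : ℂ)))

/-- Partial derivative in the first (real) argument. -/
def D1 (F : ℝ → ℂ → ℂ) : ℝ → ℂ → ℂ := fun x p => deriv (fun y => F y p) x

/-- Partial derivative in the second (complex) argument. -/
def D2 (F : ℝ → ℂ → ℂ) : ℝ → ℂ → ℂ := fun x p => deriv (fun q => F x q) p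

/-- The `+` part `g⁺` of a function on `ℝ × (ℝ/2πℤ)`. -/
def plusPart (F : ℝ → ℂ → ℂ) : ℝ → ℂ → ℂ := fun y p =>
  ∑' n : ℕ, Complex.exp (Complex.I * (n : ℂ) * p) *
    ((2 * (Real.pi : ℂ))⁻¹ * ∫ q in (-Real.pi)..Real.pi,
      F y (q : ℂ) * Complex.exp (-(Complex.I * (n : ℂ) * (q : ℂ))))

/-- The `-` part `g⁻` of a function on `ℝ × (ℝ/2πℤ)`. -/
def minusPart (F : ℝ → ℂ → ℂ) : ℝ → ℂ → ℂ := fun y p =>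
  ∑' n : ℕ, Complex.exp (-(Complex.I * ((n : ℂ) + 1) * p)) *
    ((2 * (Real.pi : ℂ))⁻¹ * ∫ q in (-Real.pi)..Real.pi,
      F y (q : ℂ) * Complex.exp (Complex.I * ((n : ℂ) + 1) * (q : ℂ)))

/-- Poisson bracket `{u,v} = ∂₁u ∂₂v - ∂₁v ∂₂u`. -/
def pois (u v : ℝ → ℂ → ℂ) : ℝ → ℂ → ℂ := fun y p =>
  D1 u y p * D2 v y p - D1 v y p * D2 u y p

/-- Truncation of the Moyal product to the first `k` orders of derivatives. -/
def moyalTrunc (k : ℕ) (ν : ℝ) (f g : ℝ → ℂ → ℂ) : ℝ → ℂ → ℂ := fun y p =>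
  ∑ j ∈ Finset.range k, ((Nat.factorial j : ℂ))⁻¹ * (Complex.I * (ν : ℂ) / 2) ^ j *
    ∑ i ∈ Finset.range (j + 1), (j.choose i : ℂ) * (-1) ^ (j - i) *
      (D1^[j - i] (D2^[i] f)) y p * (D1^[i] (D2^[j - i] g)) y p

/-- The second-order expansion of `log f₊ᴴ(ν) + log f₋ᴴ(ν)` (Corollary 4.5), `σ = σ_H`. -/
def whExp2 (σ : ℝ) (ν : ℝ) (g : ℝ → ℂ → ℂ) : ℝ → ℂ → ℂ := fun y p =>
  g y p + (Complex.I / 2) * (σ : ℂ) * (ν : ℂ) * pois (minusPart g) (plusPart g) y p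
    + ((ν : ℂ) ^ 2 / 8) *
      (2 * pois (plusPart g) (minusPart (pois (minusPart g) (plusPart g))) y p
        - 2 * pois (minusPart g) (plusPart (pois (minusPart g) (plusPart g))) y p
        - D2 (minusPart g) y p * pois (minusPart g) (D1 (plusPart g)) y p
        + D1 (minusPart g) y p * pois (minusPart g) (D2 (plusPart g)) y p
        - D1 (plusPart g) y p * pois (D2 (minusPart g)) (plusPart g) y p
        + D2 (plusPart g) y p * pois (D1 (minusPart g)) (plusPart g) y p
        - pois (D2 (minusPart g)) (D1 (plusPart g)) y p
        + pois (D1 (minusPart g)) (D2 (plusPart g)) y p)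

/-- The bidifferential operator `((∂_{φ₁}∂_{φ₂'} - ∂_{φ₂}∂_{φ₁'})/2)^N F(φ') R(φ)|_{φ'=φ}`. -/
def bidiff (N : ℕ) (F R : ℝ → ℂ → ℂ) : ℝ → ℂ → ℂ := fun y p =>
  ((1 : ℂ) / 2) ^ N * ∑ i ∈ Finset.range (N + 1), (N.choose i : ℂ) * (-1) ^ (N - i) *
    (D1^[N - i] (D2^[i] F)) y p * (D2^[N - i] (D1^[i] R)) y p

/-- Auxiliary family for the recursive definition of `R_m^{(ζ)}[f]`. -/
def RresAux (f : ℝ → ℂ → ℂ) (ζ : ℂ) : ℕ → ℕ → ℝ → ℂ → ℂ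
  | 0 => fun _ => fun y p => (ζ - f y p)⁻¹
  | m + 1 => fun n =>
      if n ≤ m then RresAux f ζ m n
      else fun y p => (ζ - f y p)⁻¹ *
        ∑ j ∈ Finset.range (m + 1),
          ((Nat.choose (2 * (m + 1)) (2 * j) : ℂ)) * (-1) ^ (m + 1 - j) *
            bidiff (2 * (m + 1 - j)) f (RresAux f ζ m j) y p

/-- The coefficients `R_m^{(ζ)}[f]` of the asymptotic expansion of the star resolvent. -/
def Rres (f : ℝ → ℂ → ℂ) (ζ : ℂ) (m : ℕ) : ℝ → ℂ → ℂ := RresAux f ζ m m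

/-- `E(c) = ∑_{k≥1} k (log c)_k (log c)_{-k}`. -/
def Efun (c : ℂ → ℂ) : ℂ :=
  ∑' k : ℕ, ((k : ℂ) + 1) * fCoef (fun z => Complex.log (c z)) ((k : ℤ) + 1) *
    fCoef (fun z => Complex.log (c z)) (-((k : ℤ) + 1))

/-! For `a, b ∈ V` the Fourier coefficients `(a_x)_m` decay like `s ^ |m|` for some `s < 1`,
uniformly in `x` (Cauchy estimates on the annulus of analyticity). Hence the double series defining
`a ⋆ b` converges absolutely and can be integrated term by term, which gives `L(a ⋆ b) = L(a) L(b)`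
entrywise with an absolutely convergent sum over `l ∈ ℤ`. Splitting that sum into `l ≥ 1` and
`l ≤ 0` gives the Toeplitz and the Hankel part: `L_{j,-n}(a) = H_{j,n+1}(a)` and
`L_{-n,k}(b) = H_{n+1,k}(b^∼)`. -/

section

open Complex Metric

lemma exp_I_mul_zpow_mul_exp (n q : ℤ) (t : ℝ) :
    exp (I * t) ^ n * exp (-(I * q * t)) = exp ((n - q : ℤ) * I * t) := by
  rw [← exp_int_mul, ← exp_add]
  push_cast
  ring_nf

lemma fCoef_zpow (n q : ℤ) : fCoef (fun z => z ^ n) q = if n = q then 1 else 0 := by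
  simp only [fCoef, exp_I_mul_zpow_mul_exp]
  split_ifs with h
  · simp only [h, sub_self, Int.cast_zero, zero_mul, exp_zero, intervalIntegral.integral_const,
      real_smul, mul_one]
    push_cast
    field_simp
    ring
  · have hc : ((n - q : ℤ) : ℂ) * I ≠ 0 := mul_ne_zero (by exact_mod_cast sub_ne_zero.2 h) I_ne_zero
    have hper : exp ((n - q : ℤ) * I * Real.pi) = exp ((n - q : ℤ) * I * (-Real.pi : ℝ)) := by
      rw [show ((n - q : ℤ) : ℂ) * I * Real.pi
          = (n - q : ℤ) * I * (-Real.pi : ℝ) + (n - q : ℤ) * (2 * Real.pi * I) by push_cast; ring,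
        exp_add, exp_int_mul_two_pi_mul_I, mul_one]
    rw [integral_exp_mul_complex hc, hper, sub_self, zero_div, mul_zero]

lemma fCoef_mul_const (f : ℂ → ℂ) (c : ℂ) (q : ℤ) :
    fCoef (fun z => f z * c) q = fCoef f q * c := by
  simp only [fCoef, mul_right_comm _ c, intervalIntegral.integral_mul_const]
  ring

lemma fCoef_comp_inv (f : ℂ → ℂ) (m : ℤ) : fCoef (fun z => f z⁻¹) m = fCoef f (-m) := by
  have h : ∀ t : ℝ, f (exp (I * t))⁻¹ * exp (-(I * m * t))
      = f (exp (I * (-t : ℝ))) * exp (-(I * (-m : ℤ) * (-t : ℝ))) := fun t => by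
    rw [← exp_neg]
    push_cast
    ring_nf
  simp only [fCoef]
  rw [intervalIntegral.integral_congr fun t _ => h t,
    intervalIntegral.integral_comp_neg fun t : ℝ => f (exp (I * t)) * exp (-(I * (-m : ℤ) * t)),
    neg_neg]

lemma norm_exp_I_mul_zpow_mul_exp (n q : ℤ) (t : ℝ) :
    ‖exp (I * t) ^ n * exp (-(I * q * t))‖ = 1 := by
  rw [exp_I_mul_zpow_mul_exp, norm_exp]
  simp

lemma hasSum_fCoef_tsum {ι : Type*} [Countable ι] (e : ι → ℤ) {c : ι → ℂ}
    (hc : Summable fun i => ‖c i‖) (q : ℤ) :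
    HasSum (fun i => if e i = q then c i else 0) (fCoef (fun z => ∑' i, z ^ e i * c i) q) := by
  have hterm : ∀ i, fCoef (fun z => z ^ e i * c i) q = if e i = q then c i else 0 := fun i => by
    rw [fCoef_mul_const, fCoef_zpow]
    split_ifs <;> simp
  simp_rw [← hterm, fCoef]
  refine HasSum.mul_left _ (intervalIntegral.hasSum_integral_of_dominated_convergence
    (fun i _ => ‖c i‖) (fun i => ?_) (fun i => ?_) ?_ intervalIntegrable_const ?_)
  · have hz : Continuous fun t : ℝ => exp (I * t) ^ e i :=
      (by fun_prop : Continuous fun t : ℝ => exp (I * t)).zpow₀ _ fun _ => .inl (exp_ne_zero _)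
    exact Continuous.aestronglyMeasurable (by fun_prop)
  · refine ae_of_all _ fun t _ => ?_
    rw [mul_right_comm, norm_mul, norm_exp_I_mul_zpow_mul_exp, one_mul]
  · exact ae_of_all _ fun t _ => hc
  · refine ae_of_all _ fun t _ => HasSum.mul_right _ (Summable.hasSum ?_)
    refine Summable.of_norm_bounded hc fun i => ?_
    rw [norm_mul, norm_zpow, norm_exp_I_mul_ofReal, one_zpow, one_mul]

def starCoef (a b : Symb) (x : ℤ) (mn : ℤ × ℤ) : ℂ :=
  fCoef (a (x + mn.1)) mn.2 * fCoef (b (x - mn.2)) mn.1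

lemma starProd_eq_tsum (a b : Symb) (x : ℤ) :
    starProd a b x = fun z => ∑' mn : ℤ × ℤ, z ^ (mn.1 + mn.2) * starCoef a b x mn := by
  funext z
  simp only [starProd, starCoef, mul_assoc]

lemma hasSum_fCoef_starProd {a b : Symb} {x : ℤ} (h : Summable fun mn => ‖starCoef a b x mn‖)
    (q : ℤ) : HasSum (fun m => starCoef a b x (m, q - m)) (fCoef (starProd a b x) q) := by
  have hinj : Function.Injective fun m : ℤ => (m, q - m) := fun _ _ hm => congrArg Prod.fst hm
  have hsupp : ∀ mn ∉ Set.range fun m : ℤ => (m, q - m),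
      (if mn.1 + mn.2 = q then starCoef a b x mn else 0) = 0 := by
    rintro ⟨m, n⟩ hmn
    rw [if_neg]
    rintro rfl
    exact hmn ⟨m, by simp⟩
  rw [starProd_eq_tsum]
  simpa [Function.comp_def] using
    (hinj.hasSum_iff hsupp).2 (hasSum_fCoef_tsum (fun mn : ℤ × ℤ => mn.1 + mn.2) h q)

lemma starCoef_add_sub (a b : Symb) (j k l : ℤ) :
    starCoef a b (j + k) (l - k, j - l) = Lmat a j l * Lmat b l k := by
  simp only [starCoef, Lmat]
  congr 3 <;> ring

lemma hasSum_Lmat_starProd {a b : Symb} {j k : ℤ}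
    (h : Summable fun mn => ‖starCoef a b (j + k) mn‖) :
    HasSum (fun l => Lmat a j l * Lmat b l k) (Lmat (starProd a b) j k) := by
  have := (Equiv.subRight k).hasSum_iff.2 (hasSum_fCoef_starProd h (j - k))
  simp only [Function.comp_def, Equiv.subRight_apply, sub_sub_sub_cancel_right,
    starCoef_add_sub] at this
  exact this

lemma summable_norm_Lmat_mul {a b : Symb} {j k : ℤ}
    (h : Summable fun mn => ‖starCoef a b (j + k) mn‖) :
    Summable fun l => ‖Lmat a j l * Lmat b l k‖ := by
  have hinj : Function.Injective fun l : ℤ => (l - k, j - l) := fun _ _ hl => by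
    simpa using congrArg Prod.fst hl
  simpa only [Function.comp_def, starCoef_add_sub] using h.comp_injective hinj

lemma isOpen_annulus (ρ : ℝ) : IsOpen (annulus ρ) :=
  (isOpen_lt continuous_const continuous_norm).inter (isOpen_lt continuous_norm continuous_const)

lemma closedBall_diff_ball_subset_annulus {ρ r R : ℝ} (hr : ρ < r) (hR : R < ρ⁻¹) :
    closedBall (0 : ℂ) R \ ball 0 r ⊆ annulus ρ := by
  rintro z ⟨hzR, hzr⟩
  rw [mem_closedBall_zero_iff] at hzR
  rw [mem_ball_zero_iff, not_lt] at hzr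
  exact ⟨hr.trans_le hzr, hzR.trans_lt hR⟩

lemma circleIntegral_eq_of_differentiableOn_annulus {ρ r R : ℝ} {f : ℂ → ℂ} (hρ : 0 < ρ)
    (hf : DifferentiableOn ℂ f (annulus ρ)) (hr : r ∈ Set.Ioo ρ ρ⁻¹) (hR : R ∈ Set.Ioo ρ ρ⁻¹) :
    (∮ z in C(0, R), f z) = ∮ z in C(0, r), f z := by
  wlog hrR : r ≤ R generalizing r R
  · exact (this hR hr (le_of_not_ge hrR)).symm
  have hsub := closedBall_diff_ball_subset_annulus hr.1 hR.2
  refine circleIntegral_eq_of_differentiable_on_annulus_off_countable (hρ.trans hr.1) hrR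
    Set.countable_empty (hf.continuousOn.mono hsub) fun z hz => ?_
  refine hf.differentiableAt ((isOpen_annulus ρ).mem_nhds (hsub ?_))
  exact ⟨ball_subset_closedBall hz.1.1, fun hzr => hz.1.2 (ball_subset_closedBall hzr)⟩

lemma fCoef_eq_circleIntegral (f : ℂ → ℂ) (m : ℤ) :
    fCoef f m = (2 * Real.pi * I)⁻¹ * ∮ z in C(0, 1), z ^ (-m - 1) * f z := by
  have hπ : (Real.pi : ℂ) ≠ 0 := ofReal_ne_zero.2 Real.pi_ne_zero
  have hintegrand : ∀ t : ℝ, f (exp (I * t)) * exp (-(I * m * t))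
      = f (circleMap 0 1 t) * circleMap 0 1 t ^ (-m) := fun t => by
    rw [circleMap_zero, ofReal_one, one_mul, ← exp_int_mul, mul_comm (t : ℂ) I]
    push_cast
    ring_nf
  have hcirc : (∮ z in C(0, 1), z ^ (-m - 1) * f z)
      = I * ∫ t in (0 : ℝ)..2 * Real.pi, f (circleMap 0 1 t) * circleMap 0 1 t ^ (-m) := by
    rw [circleIntegral, ← intervalIntegral.integral_const_mul]
    refine intervalIntegral.integral_congr fun t _ => ?_
    rw [deriv_circleMap, smul_eq_mul, zpow_sub_one₀ (circleMap_ne_center one_ne_zero)]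
    field_simp [circleMap_ne_center (c := (0 : ℂ)) one_ne_zero]
  have hperiod := ((periodic_circleMap (0 : ℂ) 1).comp
    fun z => f z * z ^ (-m)).intervalIntegral_add_eq (-Real.pi) 0
  rw [neg_add_eq_sub, show 2 * Real.pi - Real.pi = Real.pi by ring, zero_add] at hperiod
  simp only [fCoef, hintegrand, Function.comp_def] at hperiod ⊢
  rw [hperiod, hcirc]
  field_simp

lemma norm_fCoef_le {ρ r M : ℝ} {f : ℂ → ℂ} (hρ : ρ ∈ Set.Ioo 0 1)
    (hf : DifferentiableOn ℂ f (annulus ρ)) (hM : ∀ z ∈ annulus ρ, ‖f z‖ ≤ M)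
    (hr : r ∈ Set.Ioo ρ ρ⁻¹) (m : ℤ) : ‖fCoef f m‖ ≤ M * r ^ (-m) := by
  have hr0 : 0 < r := hρ.1.trans hr.1
  have hne : ∀ z ∈ annulus ρ, z ≠ 0 := fun z hz h0 => by
    simpa [h0, hρ.1.le] using hz.1.trans' hρ.1
  have hg : DifferentiableOn ℂ (fun z => z ^ (-m - 1) * f z) (annulus ρ) := fun z hz =>
    ((differentiableAt_zpow.2 (.inl (hne z hz))).differentiableWithinAt).mul (hf z hz)
  have hone : (1 : ℝ) ∈ Set.Ioo ρ ρ⁻¹ := ⟨hρ.2, (one_lt_inv₀ hρ.1).2 hρ.2⟩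
  have hbound : ‖∮ z in C(0, r), z ^ (-m - 1) * f z‖ ≤ 2 * Real.pi * r * (r ^ (-m - 1) * M) := by
    refine circleIntegral.norm_integral_le_of_norm_le_const hr0.le fun z hz => ?_
    rw [mem_sphere_zero_iff_norm] at hz
    rw [norm_mul, norm_zpow, hz]
    exact mul_le_mul_of_nonneg_left (hM z (by simpa [annulus, hz] using hr)) (by positivity)
  rw [fCoef_eq_circleIntegral, circleIntegral_eq_of_differentiableOn_annulus hρ.1 hg hr hone,
    norm_mul, norm_inv]
  calc ‖2 * (Real.pi : ℂ) * I‖⁻¹ * ‖∮ z in C(0, r), z ^ (-m - 1) * f z‖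
      ≤ (2 * Real.pi)⁻¹ * (2 * Real.pi * r * (r ^ (-m - 1) * M)) := by
        rw [norm_mul, norm_I, mul_one, norm_mul, norm_real, Real.norm_of_nonneg Real.pi_pos.le,
          RCLike.norm_ofNat]
        gcongr
    _ = M * r ^ (-m) := by
        rw [zpow_sub_one₀ hr0.ne']
        field_simp

lemma exists_norm_fCoef_le_of_memVrho {ρ s : ℝ} {a : Symb} (h : memVrho ρ a)
    (hρ : ρ ∈ Set.Ioo 0 1) (hs : s ∈ Set.Ioo ρ 1) :
    ∃ C, ∀ k m, ‖fCoef (a k) m‖ ≤ C * s ^ m.natAbs := by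
  obtain ⟨han, M, hM⟩ := h
  have hs0 : 0 < s := hρ.1.trans hs.1
  refine ⟨M, fun k m => ?_⟩
  have hdecay := fun r (hr : r ∈ Set.Ioo ρ ρ⁻¹) =>
    norm_fCoef_le hρ (han k).differentiableOn (hM k) hr m
  rcases le_or_gt 0 m with hm | hm
  · have hr : s⁻¹ ∈ Set.Ioo ρ ρ⁻¹ :=
      ⟨hρ.2.trans ((one_lt_inv₀ hs0).2 hs.2), inv_strictAnti₀ hρ.1 hs.1⟩
    rw [← zpow_natCast, Int.natAbs_of_nonneg hm]
    simpa only [inv_zpow', neg_neg] using hdecay _ hr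
  · have hr : s ∈ Set.Ioo ρ ρ⁻¹ := ⟨hs.1, hs.2.trans ((one_lt_inv₀ hρ.1).2 hρ.2)⟩
    rw [← zpow_natCast, Int.ofNat_natAbs_of_nonpos hm.le]
    exact hdecay _ hr

lemma summable_pow_natAbs {s : ℝ} (hs0 : 0 ≤ s) (hs1 : s < 1) :
    Summable fun n : ℤ => s ^ n.natAbs :=
  .of_nat_of_neg (by simpa using summable_geometric_of_lt_one hs0 hs1)
    (by simpa using summable_geometric_of_lt_one hs0 hs1)

lemma summable_norm_starCoef {a b : Symb} {Ca Cb s : ℝ} (hs0 : 0 ≤ s) (hs1 : s < 1)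
    (ha : ∀ k m, ‖fCoef (a k) m‖ ≤ Ca * s ^ m.natAbs)
    (hb : ∀ k m, ‖fCoef (b k) m‖ ≤ Cb * s ^ m.natAbs) (x : ℤ) :
    Summable fun mn => ‖starCoef a b x mn‖ := by
  have hCa : ∀ n : ℤ, 0 ≤ Ca * s ^ n.natAbs := fun n => (norm_nonneg _).trans (ha 0 n)
  have hCb : ∀ m : ℤ, 0 ≤ Cb * s ^ m.natAbs := fun m => (norm_nonneg _).trans (hb 0 m)
  refine Summable.of_nonneg_of_le (fun _ => norm_nonneg _) (fun mn => ?_)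
    (Summable.mul_of_nonneg ((summable_pow_natAbs hs0 hs1).mul_left Cb)
      ((summable_pow_natAbs hs0 hs1).mul_left Ca) hCb hCa)
  rw [starCoef, norm_mul, mul_comm]
  exact mul_le_mul (hb _ _) (ha _ _) (norm_nonneg _) (hCb _)

lemma summable_norm_starCoef_of_memV {a b : Symb} (ha : memV a) (hb : memV b) (x : ℤ) :
    Summable fun mn => ‖starCoef a b x mn‖ := by
  obtain ⟨ρa, hρa, ha⟩ := ha
  obtain ⟨ρb, hρb, hb⟩ := hb
  obtain ⟨s, hs, hs1⟩ := exists_between (max_lt hρa.2 hρb.2)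
  obtain ⟨Ca, hCa⟩ := exists_norm_fCoef_le_of_memVrho ha hρa ⟨(le_max_left _ _).trans_lt hs, hs1⟩
  obtain ⟨Cb, hCb⟩ := exists_norm_fCoef_le_of_memVrho hb hρb ⟨(le_max_right _ _).trans_lt hs, hs1⟩
  exact summable_norm_starCoef (hρa.1.le.trans ((le_max_left _ _).trans hs.le)) hs1 hCa hCb x

lemma Tmat_mul_Tmat_succ (a b : Symb) (j k n : ℕ) :
    Tmat a j (n + 1) * Tmat b (n + 1) k = Lmat a j (n + 1) * Lmat b (n + 1) k := by
  simp only [Tmat, Nat.cast_add, Nat.cast_one]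

lemma Hmat_succ_right (a : Symb) (j n : ℕ) : Hmat a j (n + 1) = Lmat a j (-n) := by
  simp only [Hmat, Lmat, Nat.cast_add, Nat.cast_one]
  ring_nf

lemma Hmat_reflect_succ_left (b : Symb) (k n : ℕ) :
    Hmat (reflect b) (n + 1) k = Lmat b (-n) k := by
  unfold Hmat reflect
  simp only [fCoef_comp_inv, Lmat, Nat.cast_add, Nat.cast_one]
  ring_nf

lemma HasSum.int_of_nat_add_one_of_neg {M : Type*} [AddCommMonoid M] [TopologicalSpace M]
    [ContinuousAdd M] {f : ℤ → M} {a b : M} (h₁ : HasSum (fun n : ℕ => f (n + 1)) a)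
    (h₂ : HasSum (fun n : ℕ => f (-n)) b) : HasSum f (a + b) := by
  rw [← (Equiv.addRight 1).hasSum_iff]
  refine HasSum.of_nat_of_neg_add_one h₁ ?_
  convert h₂ using 3 with n
  simp only [Function.comp_apply, Equiv.coe_addRight]
  congr 1
  ring

end

/-- **Star Toeplitz–Hankel decomposition** (Lemma 3.2 of the paper):
`T(a⋆b) = T(a)T(b) + H(a)H(b^∼)`, stated entrywise on `ℓ²(ℕ)` with absolutely
convergent series. -/
theorem star_toeplitz_hankel (a b : Symb) (ha : memV a) (hb : memV b) :
    ∀ j k : ℕ, 1 ≤ j → 1 ≤ k →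
      Summable (fun l : ℕ => ‖Tmat a j (l + 1) * Tmat b (l + 1) k‖) ∧
      Summable (fun l : ℕ => ‖Hmat a j (l + 1) * Hmat (reflect b) (l + 1) k‖) ∧
      Tmat (starProd a b) j k =
        (∑' l : ℕ, Tmat a j (l + 1) * Tmat b (l + 1) k) +
          ∑' l : ℕ, Hmat a j (l + 1) * Hmat (reflect b) (l + 1) k := by
  intro j k _ _
  have hstar := summable_norm_starCoef_of_memV ha hb (j + k)
  have hsum := summable_norm_Lmat_mul hstar
  have hT : Summable fun n : ℕ => ‖Tmat a j (n + 1) * Tmat b (n + 1) k‖ := by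
    simpa only [Function.comp_def, Tmat_mul_Tmat_succ] using
      hsum.comp_injective (i := fun n : ℕ => (n : ℤ) + 1) fun _ _ h => by simpa using h
  have hH : Summable fun n : ℕ => ‖Hmat a j (n + 1) * Hmat (reflect b) (n + 1) k‖ := by
    simpa only [Function.comp_def, Hmat_succ_right, Hmat_reflect_succ_left] using
      hsum.comp_injective (i := fun n : ℕ => -(n : ℤ)) fun _ _ h => by simpa using h
  refine ⟨hT, hH, (hasSum_Lmat_starProd hstar).unique ?_⟩
  refine HasSum.int_of_nat_add_one_of_neg ?_ ?_
  · simpa only [Tmat_mul_Tmat_succ] using hT.of_norm.hasSum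
  · simpa only [Hmat_succ_right, Hmat_reflect_succ_left] using hH.of_norm.hasSum
end
end

section
/- Trace identities for star-Toeplitz operators of Moyal brackets: Let a₋, b₋ ∈ V be − symbols and a₊, b₊ ∈ V be + symbols. Then: (i) every diagonal entry of T({a₋, b₋}_M) and of T({a₊, b₊}_M) vanishes, i.e. T_{j,j}({a₋,b₋}_M) = T_{j,j}({a₊,b₊}_M) = 0 for all j ≥ 1; (ii) if moreover the matrices of T(a₊) and T(b₋) have absolutely summable entries (so that they are trace class), then ∑_{j≥1} T_{j,j}({a₊, b₋}_M) converges absolutely and equals −i ∑_{m=1}^{∞} ∑_{j=1}^{m} (a_{+, j−m/2})_m (b_{−, j−m/2})_{−m}. -/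
open Filter MeasureTheory

noncomputable section

/-! Uniform analyticity of the symbols on an annulus gives geometric decay of their Fourier
coefficients, uniformly in `x`. This justifies computing the Fourier coefficients of `a ⋆ b`
term by term, i.e. `L(a ⋆ b) = L(a) L(b)`, so the diagonal of `L({a, b}_M)` is `-i` times the
diagonal of the commutator `[L(a), L(b)]`.

If `a` and `b` are both `-` (or both `+`) symbols, the only intermediate index surviving in
`(L(a) L(b))_{tt}` is `n = t`, and `L_{tt}(a) L_{tt}(b)` is symmetric in `a` and `b`.

For `a₊` and `b₋`, split the intermediate index of the `t`-th diagonal entry (`t ≥ 1`) into the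
Toeplitz block `n ≥ 1` and the corner `n ≤ 0`. The corner of `L(b₋) L(a₊)` vanishes by
triangularity. When `T(a₊)` is trace class, the block parts of `L(a₊) L(b₋)` and `L(b₋) L(a₊)`
have the same absolutely convergent double sum and cancel. What remains is
`-i ∑_{t ≥ 1, n ≤ 0} L_{tn}(a₊) L_{nt}(b₋)`, which becomes the stated double sum after
reindexing by `m = t - n`. -/

namespace StarToeplitz

open Complex Set Function Metric Finset.HasAntidiagonal

variable {C σ : ℝ} {a b : Symb}

lemma integral_exp_int_mul_I (n : ℤ) :
    ∫ p in (-Real.pi)..Real.pi, exp (I * n * p) = if n = 0 then 2 * (Real.pi : ℂ) else 0 := by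
  rcases eq_or_ne n 0 with rfl | hn
  · simp only [Int.cast_zero, mul_zero, zero_mul, Complex.exp_zero, if_true,
      intervalIntegral.integral_const, sub_neg_eq_add, Complex.real_smul]
    push_cast
    ring
  · have hc : I * (n : ℂ) ≠ 0 := by simp [hn]
    rw [if_neg hn, integral_exp_mul_complex hc]
    have h1 : I * n * ((Real.pi : ℝ) : ℂ) = (n : ℤ) * (Real.pi * I) := by ring
    have h2 : I * n * ((-Real.pi : ℝ) : ℂ) = ((-n : ℤ) : ℂ) * (Real.pi * I) := by push_cast; ring
    rw [h1, h2, exp_int_mul, exp_int_mul, exp_pi_mul_I, zpow_neg, ← inv_zpow, inv_neg, inv_one,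
      sub_self, zero_div]

lemma norm_exp_I_mul_ofReal (p : ℝ) : ‖exp (I * p)‖ = 1 := by
  rw [mul_comm, norm_exp_ofReal_mul_I]

lemma norm_exp_I_mul_int_mul (n : ℤ) (p : ℝ) : ‖exp (I * n * p)‖ = 1 := by
  rw [mul_assoc]
  exact_mod_cast norm_exp_I_mul_ofReal (n * p)

lemma norm_exp_I_mul_zpow_mul (p : ℝ) (n : ℤ) (c : ℂ) : ‖exp (I * p) ^ n * c‖ = ‖c‖ := by
  rw [norm_mul, norm_zpow, norm_exp_I_mul_ofReal, one_zpow, one_mul]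

lemma fCoef_const_mul (c : ℂ) (f : ℂ → ℂ) (m : ℤ) :
    fCoef (fun z => c * f z) m = c * fCoef f m := by
  simp only [fCoef, mul_assoc, intervalIntegral.integral_const_mul]
  ring

lemma fCoef_sub {f g : ℂ → ℂ} (hf : Continuous fun p : ℝ => f (exp (I * p)))
    (hg : Continuous fun p : ℝ => g (exp (I * p))) (m : ℤ) :
    fCoef (fun z => f z - g z) m = fCoef f m - fCoef g m := by
  have hint {h : ℂ → ℂ} (hh : Continuous fun p : ℝ => h (exp (I * p))) :
      IntervalIntegrable (fun p : ℝ => h (exp (I * p)) * exp (-(I * m * p)))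
        MeasureTheory.volume (-Real.pi) Real.pi :=
    (hh.mul (by fun_prop)).intervalIntegrable _ _
  simp only [fCoef, sub_mul]
  rw [intervalIntegral.integral_sub (hint hf) (hint hg), mul_sub]

lemma continuous_tsum_zpow_mul {ι : Type*} {c : ι → ℂ} (e : ι → ℤ)
    (hc : Summable fun i => ‖c i‖) : Continuous fun p : ℝ => ∑' i, exp (I * p) ^ e i * c i := by
  refine continuous_tsum (fun i => ?_) hc fun i p => (norm_exp_I_mul_zpow_mul p (e i) (c i)).le
  have hexp : Continuous fun p : ℝ => exp (I * p) := by fun_prop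
  exact (hexp.zpow₀ _ fun p => Or.inl (exp_ne_zero _)).mul continuous_const

lemma hasSum_fCoef_tsum_zpow_mul {ι : Type*} [Countable ι] {c : ι → ℂ} (e : ι → ℤ)
    (hc : Summable fun i => ‖c i‖) (l : ℤ) :
    HasSum (fun i => if e i = l then c i else 0) (fCoef (fun z => ∑' i, z ^ e i * c i) l) := by
  have hterm (i : ι) (p : ℝ) : exp (I * p) ^ e i * c i * exp (-(I * l * p)) =
      c i * exp (I * (e i - l : ℤ) * p) := by
    rw [← exp_int_mul, mul_right_comm, ← exp_add, mul_comm]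
    push_cast
    ring_nf
  have hnorm (i : ι) (p : ℝ) : ‖exp (I * p) ^ e i * c i * exp (-(I * l * p))‖ = ‖c i‖ := by
    rw [hterm, norm_mul, norm_exp_I_mul_int_mul, mul_one]
  have hsum := intervalIntegral.hasSum_integral_of_dominated_convergence
    (μ := MeasureTheory.volume) (a := -Real.pi) (b := Real.pi)
    (F := fun i (p : ℝ) => exp (I * p) ^ e i * c i * exp (-(I * l * p)))
    (f := fun p : ℝ => (∑' i, exp (I * p) ^ e i * c i) * exp (-(I * l * p)))
    (fun i _ => ‖c i‖) (fun i => by fun_prop) (fun i => .of_forall fun p _ => (hnorm i p).le)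
    (.of_forall fun _ _ => hc) intervalIntegrable_const (.of_forall fun p _ => ?_)
  · simp only [hterm, intervalIntegral.integral_const_mul, integral_exp_int_mul_I,
      sub_eq_zero] at hsum
    have h2π : (2 * (Real.pi : ℂ)) ≠ 0 := by simp [Real.pi_ne_zero]
    have hcoef : (fun i => if e i = l then c i else 0) =
        fun i => (2 * (Real.pi : ℂ))⁻¹ * (c i * if e i = l then 2 * (Real.pi : ℂ) else 0) := by
      ext i
      split_ifs
      · field_simp
      · simp
    rw [hcoef]
    exact hsum.mul_left _
  · exact (hc.of_norm_bounded fun i =>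
      (norm_exp_I_mul_zpow_mul p (e i) (c i)).le).hasSum.mul_right _

lemma fCoef_eq_circleIntegral (f : ℂ → ℂ) (m : ℤ) :
    fCoef f m = (2 * Real.pi * I : ℂ)⁻¹ * ∮ z in C(0, 1), f z * z ^ (-m - 1) := by
  set F : ℝ → ℂ := fun p => f (exp (I * p)) * exp (-(I * m * p))
  have hF : Periodic F (2 * Real.pi) := by
    intro p
    have h1 : I * ((p + 2 * Real.pi : ℝ) : ℂ) = I * p + 2 * Real.pi * I := by push_cast; ring
    have h2 : -(I * m * ((p + 2 * Real.pi : ℝ) : ℂ)) =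
        -(I * m * p) + (-m : ℤ) * (2 * Real.pi * I) := by
      push_cast; ring
    simp only [F, h1, h2, exp_add, exp_int_mul, exp_two_pi_mul_I, one_zpow, mul_one]
  have hcircle : (∮ z in C(0, 1), f z * z ^ (-m - 1)) = I * ∫ p in (0)..(2 * Real.pi), F p := by
    rw [circleIntegral, ← intervalIntegral.integral_const_mul]
    refine intervalIntegral.integral_congr fun p _ => ?_
    have hmap : circleMap 0 1 p = exp (I * p) := by simp [circleMap, mul_comm]
    rw [deriv_circleMap, hmap, smul_eq_mul, ← exp_int_mul,
      show ∀ u v w : ℂ, u * I * (v * w) = I * (v * (u * w)) from fun _ _ _ => by ring, ← exp_add]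
    congr 3
    push_cast
    ring
  have hshift := hF.intervalIntegral_add_eq 0 (-Real.pi)
  rw [zero_add, show -Real.pi + 2 * Real.pi = Real.pi by ring] at hshift
  rw [hcircle, hshift, fCoef, ← mul_assoc]
  congr 1
  field_simp

lemma closedBall_diff_ball_subset_annulus {ρ r R : ℝ} (hr : ρ < r) (hR : R < ρ⁻¹) :
    closedBall (0 : ℂ) R \ ball 0 r ⊆ annulus ρ := by
  intro z ⟨hzR, hzr⟩
  rw [mem_closedBall, dist_zero_right] at hzR
  rw [mem_ball, dist_zero_right, not_lt] at hzr
  exact ⟨hr.trans_le hzr, hzR.trans_lt hR⟩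

lemma circleIntegral_eq_of_differentiableOn_annulus {g : ℂ → ℂ} {ρ r R : ℝ}
    (hg : DifferentiableOn ℂ g (annulus ρ)) (hρ : 0 ≤ ρ) (hr : r ∈ Ioo ρ ρ⁻¹)
    (hR : R ∈ Ioo ρ ρ⁻¹) : (∮ z in C(0, r), g z) = ∮ z in C(0, R), g z := by
  wlog hrR : r ≤ R generalizing r R
  · exact (this hR hr (le_of_not_ge hrR)).symm
  have hsub := closedBall_diff_ball_subset_annulus hr.1 hR.2
  have hopen : IsOpen (annulus ρ) :=
    (isOpen_lt continuous_const continuous_norm).inter (isOpen_lt continuous_norm continuous_const)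
  refine (circleIntegral_eq_of_differentiable_on_annulus_off_countable (hρ.trans_lt hr.1) hrR
    countable_empty (hg.continuousOn.mono hsub) fun z hz => ?_).symm
  refine hg.differentiableAt (hopen.mem_nhds (hsub ?_))
  exact ⟨ball_subset_closedBall hz.1.1, fun h => hz.1.2 (ball_subset_closedBall h)⟩

lemma norm_fCoef_le_of_annulus {f : ℂ → ℂ} {ρ M r : ℝ} (hρ : ρ ∈ Ioo 0 1)
    (hf : DifferentiableOn ℂ f (annulus ρ)) (hM : ∀ z ∈ annulus ρ, ‖f z‖ ≤ M)
    (hr : r ∈ Ioo ρ ρ⁻¹) (m : ℤ) : ‖fCoef f m‖ ≤ M * r ^ (-m) := by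
  have hr0 : 0 < r := hρ.1.trans hr.1
  have h1 : (1 : ℝ) ∈ Ioo ρ ρ⁻¹ := ⟨hρ.2, (one_lt_inv₀ hρ.1).mpr hρ.2⟩
  have hzero : (0 : ℂ) ∉ annulus ρ := fun h => by simpa using hρ.1.trans h.1
  have hg : DifferentiableOn ℂ (fun z => f z * z ^ (-m - 1)) (annulus ρ) :=
    hf.mul fun z hz => (differentiableAt_zpow.mpr
      (Or.inl (ne_of_mem_of_not_mem hz hzero))).differentiableWithinAt
  have hbound : ∀ z ∈ sphere (0 : ℂ) r, ‖f z * z ^ (-m - 1)‖ ≤ M * r ^ (-m - 1) := by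
    intro z hz
    rw [mem_sphere, dist_zero_right] at hz
    rw [norm_mul, norm_zpow, hz]
    exact mul_le_mul_of_nonneg_right (hM z ⟨hz ▸ hr.1, hz ▸ hr.2⟩) (zpow_nonneg hr0.le _)
  calc ‖fCoef f m‖ = ‖(2 * Real.pi * I : ℂ)⁻¹ • ∮ z in C(0, r), f z * z ^ (-m - 1)‖ := by
        rw [fCoef_eq_circleIntegral, smul_eq_mul,
          circleIntegral_eq_of_differentiableOn_annulus hg hρ.1.le h1 hr]
    _ ≤ r * (M * r ^ (-m - 1)) :=
        circleIntegral.norm_two_pi_i_inv_smul_integral_le_of_norm_le_const hr0.le hbound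
    _ = M * r ^ (-m) := by
        rw [zpow_sub_one₀ hr0.ne']
        field_simp

def CoeffDecay (C σ : ℝ) (a : Symb) : Prop :=
  ∀ k m : ℤ, ‖fCoef (a k) m‖ ≤ C * σ ^ m.natAbs

lemma coeffDecay_of_memVrho {ρ : ℝ} (hρ : ρ ∈ Ioo 0 1) (ha : memVrho ρ a) :
    ∃ C, CoeffDecay C ((1 + ρ) / 2) a := by
  obtain ⟨hA, M, hM⟩ := ha
  have hρσ : ρ < (1 + ρ) / 2 := by linarith [hρ.2]
  have hσ1 : (1 + ρ) / 2 < 1 := by linarith [hρ.2]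
  have hρ1 : 1 < ρ⁻¹ := (one_lt_inv₀ hρ.1).mpr hρ.2
  refine ⟨M, fun k m => ?_⟩
  have hbound r (hr : r ∈ Ioo ρ ρ⁻¹) :=
    norm_fCoef_le_of_annulus hρ (hA k).differentiableOn (hM k) hr m
  rcases le_or_gt 0 m with hm | hm
  · refine (hbound _ ⟨hρ.2.trans ((one_lt_inv₀ (hρ.1.trans hρσ)).mpr hσ1),
      inv_strictAnti₀ hρ.1 hρσ⟩).trans_eq ?_
    rw [inv_zpow', neg_neg, ← zpow_natCast, Int.natAbs_of_nonneg hm]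
  · refine (hbound _ ⟨hρσ, hσ1.trans hρ1⟩).trans_eq ?_
    rw [← zpow_natCast, Int.ofNat_natAbs_of_nonpos hm.le]

lemma CoeffDecay.nonneg (h : CoeffDecay C σ a) : 0 ≤ C := by
  simpa using (norm_nonneg _).trans (h 0 0)

lemma CoeffDecay.mono {C' σ' : ℝ} (h : CoeffDecay C σ a) (hC : C ≤ C') (hσ : 0 ≤ σ)
    (hσσ' : σ ≤ σ') : CoeffDecay C' σ' a := fun k m =>
  (h k m).trans (mul_le_mul hC (pow_le_pow_left₀ hσ hσσ' _) (by positivity) (h.nonneg.trans hC))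

lemma CoeffDecay.norm_le (h : CoeffDecay C σ a) (hσ₀ : 0 ≤ σ) (hσ₁ : σ ≤ 1) (k m : ℤ) :
    ‖fCoef (a k) m‖ ≤ C :=
  (h k m).trans (mul_le_of_le_one_right h.nonneg (pow_le_one₀ hσ₀ hσ₁))

lemma exists_coeffDecay (ha : memV a) (hb : memV b) :
    ∃ C σ, σ ∈ Ioo (0 : ℝ) 1 ∧ CoeffDecay C σ a ∧ CoeffDecay C σ b := by
  obtain ⟨ρ, hρ, hVa⟩ := ha
  obtain ⟨ρ', hρ', hVb⟩ := hb
  obtain ⟨C, hC⟩ := coeffDecay_of_memVrho hρ hVa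
  obtain ⟨C', hC'⟩ := coeffDecay_of_memVrho hρ' hVb
  have hpos {r : ℝ} (hr : r ∈ Ioo (0 : ℝ) 1) : 0 ≤ (1 + r) / 2 := by linarith [hr.1]
  refine ⟨max C C', max ((1 + ρ) / 2) ((1 + ρ') / 2), ⟨?_, ?_⟩,
    hC.mono (le_max_left _ _) (hpos hρ) (le_max_left _ _),
    hC'.mono (le_max_right _ _) (hpos hρ') (le_max_right _ _)⟩
  · exact lt_max_of_lt_left (by linarith [hρ.1])
  · exact max_lt (by linarith [hρ.2]) (by linarith [hρ'.2])

lemma summable_pow_natAbs (hσ₀ : 0 ≤ σ) (hσ₁ : σ < 1) :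
    Summable fun m : ℤ => σ ^ m.natAbs :=
  .of_nat_of_neg (by simpa using summable_geometric_of_lt_one hσ₀ hσ₁)
    (by simpa using summable_geometric_of_lt_one hσ₀ hσ₁)

lemma tsum_int_eq_tsum_nat_add_one_add_neg {G : Type*} [AddCommGroup G] [UniformSpace G]
    [IsUniformAddGroup G] [CompleteSpace G] [T2Space G] {f : ℤ → G} (hf : Summable f) :
    ∑' n, f n = ∑' k : ℕ, (f (k + 1) + f (-k)) := by
  have h₁ : Summable fun k : ℕ => f (k + 1) := hf.comp_injective fun k k' h => by simpa using h
  have h₂ : Summable fun k : ℕ => f (-k) := hf.comp_injective fun k k' h => by simpa using h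
  have h : HasSum (fun n => f (-n)) (∑' k : ℕ, f (-k) + ∑' k : ℕ, f (k + 1)) :=
    h₂.hasSum.of_nat_of_neg_add_one (by simpa using h₁.hasSum)
  rw [(((Equiv.neg ℤ).hasSum_iff (f := f)).mp h).tsum_eq, h₁.tsum_add h₂, add_comm]

lemma hasSum_sum_antidiagonal {M A : Type*} [AddCommMonoid M] [TopologicalSpace M]
    [ContinuousAdd M] [RegularSpace M] [AddCommMonoid A] [Finset.HasAntidiagonal A]
    {f : A × A → M} {s : M} (h : HasSum f s) :
    HasSum (fun n => ∑ p ∈ antidiagonal n, f p) s :=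
  (sigmaAntidiagonalEquivProd.hasSum_iff.mpr h).sigma fun n => Finset.hasSum (antidiagonal n) f

lemma starProd_eq_tsum (a b : Symb) (x : ℤ) :
    starProd a b x = fun z => ∑' mn : ℤ × ℤ,
      z ^ (mn.1 + mn.2) * (fCoef (a (x + mn.1)) mn.2 * fCoef (b (x - mn.2)) mn.1) := by
  ext z
  simp only [starProd, mul_assoc]

lemma summable_norm_starProd_coeff (ha : CoeffDecay C σ a) (hb : CoeffDecay C σ b)
    (hσ₀ : 0 ≤ σ) (hσ₁ : σ < 1) (x : ℤ) :
    Summable fun mn : ℤ × ℤ => ‖fCoef (a (x + mn.1)) mn.2 * fCoef (b (x - mn.2)) mn.1‖ := by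
  have hC := ha.nonneg
  have hg := (summable_pow_natAbs hσ₀ hσ₁).mul_left C
  refine (hg.mul_of_nonneg hg (fun _ => by positivity) fun _ => by positivity).of_nonneg_of_le
    (fun _ => norm_nonneg _) fun mn => ?_
  rw [norm_mul, mul_comm]
  exact mul_le_mul (hb _ _) (ha _ _) (norm_nonneg _) (by positivity)

lemma continuous_starProd_circle (ha : CoeffDecay C σ a) (hb : CoeffDecay C σ b)
    (hσ₀ : 0 ≤ σ) (hσ₁ : σ < 1) (x : ℤ) :
    Continuous fun p : ℝ => starProd a b x (exp (I * p)) := by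
  rw [starProd_eq_tsum]
  exact continuous_tsum_zpow_mul _ (summable_norm_starProd_coeff ha hb hσ₀ hσ₁ x)

lemma Lmat_starProd (ha : CoeffDecay C σ a) (hb : CoeffDecay C σ b) (hσ₀ : 0 ≤ σ)
    (hσ₁ : σ < 1) (j k : ℤ) : Lmat (starProd a b) j k = ∑' n, Lmat a j n * Lmat b n k := by
  have h := hasSum_fCoef_tsum_zpow_mul (fun mn : ℤ × ℤ => mn.1 + mn.2)
    (summable_norm_starProd_coeff ha hb hσ₀ hσ₁ (j + k)) (j - k)
  rw [← starProd_eq_tsum] at h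
  have hinj : Injective fun n : ℤ => (n - k, j - n) := fun n n' h => by
    simpa using congrArg Prod.fst h
  rw [Lmat, ← h.tsum_eq, ← hinj.tsum_eq]
  · congr 1
    ext n
    rw [if_pos (by ring), Lmat, Lmat]
    ring_nf
  · intro mn hmn
    have : mn.1 + mn.2 = j - k := by_contra fun h => hmn (if_neg h)
    exact ⟨mn.1 + k, Prod.ext (add_sub_cancel_right _ _) (by dsimp only; omega)⟩

lemma Lmat_moyalBracket (ha : CoeffDecay C σ a) (hb : CoeffDecay C σ b) (hσ₀ : 0 ≤ σ)
    (hσ₁ : σ < 1) (j k : ℤ) : Lmat (moyalBracket a b) j k =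
      -I * (∑' n, Lmat a j n * Lmat b n k - ∑' n, Lmat b j n * Lmat a n k) := by
  rw [← Lmat_starProd ha hb hσ₀ hσ₁, ← Lmat_starProd hb ha hσ₀ hσ₁]
  exact (fCoef_const_mul _ _ _).trans (congrArg _ (fCoef_sub
    (continuous_starProd_circle ha hb hσ₀ hσ₁ _) (continuous_starProd_circle hb ha hσ₀ hσ₁ _) _))

lemma tsum_Lmat_mul_Lmat_self_of_isMinus (ha : isMinus a) (hb : isMinus b) (j : ℤ) :
    ∑' n, Lmat a j n * Lmat b n j = Lmat a j j * Lmat b j j :=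
  tsum_eq_single j fun n hn => by
    rcases hn.lt_or_gt with h | h
    · rw [ha j n h, zero_mul]
    · rw [hb n j h, mul_zero]

lemma tsum_Lmat_mul_Lmat_self_of_isPlus (ha : isPlus a) (hb : isPlus b) (j : ℤ) :
    ∑' n, Lmat a j n * Lmat b n j = Lmat a j j * Lmat b j j :=
  tsum_eq_single j fun n hn => by
    rcases hn.lt_or_gt with h | h
    · rw [hb n j h, mul_zero]
    · rw [ha j n h, zero_mul]

lemma Lmat_moyalBracket_self_of_isMinus (ha : CoeffDecay C σ a) (hb : CoeffDecay C σ b)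
    (hσ₀ : 0 ≤ σ) (hσ₁ : σ < 1) (ham : isMinus a) (hbm : isMinus b) (j : ℤ) :
    Lmat (moyalBracket a b) j j = 0 := by
  rw [Lmat_moyalBracket ha hb hσ₀ hσ₁, tsum_Lmat_mul_Lmat_self_of_isMinus ham hbm,
    tsum_Lmat_mul_Lmat_self_of_isMinus hbm ham, mul_comm (Lmat b j j), sub_self, mul_zero]

lemma Lmat_moyalBracket_self_of_isPlus (ha : CoeffDecay C σ a) (hb : CoeffDecay C σ b)
    (hσ₀ : 0 ≤ σ) (hσ₁ : σ < 1) (hap : isPlus a) (hbp : isPlus b) (j : ℤ) :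
    Lmat (moyalBracket a b) j j = 0 := by
  rw [Lmat_moyalBracket ha hb hσ₀ hσ₁, tsum_Lmat_mul_Lmat_self_of_isPlus hap hbp,
    tsum_Lmat_mul_Lmat_self_of_isPlus hbp hap, mul_comm (Lmat b j j), sub_self, mul_zero]

def diagTerm (a b : Symb) (t n : ℤ) : ℂ := Lmat a t n * Lmat b n t

def blockTerm (a b : Symb) (jk : ℕ × ℕ) : ℂ := diagTerm a b (jk.1 + 1) (jk.2 + 1)

def cornerTerm (a b : Symb) (jk : ℕ × ℕ) : ℂ := diagTerm a b (jk.1 + 1) (-jk.2)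

/-- The contributions of the intermediate indices `n = k + 1` and `n = -k` to the diagonal entry
`t = j + 1` of `[L(a), L(b)]`; the term `n = -k` of `L(b) L(a)` is omitted, as it vanishes when
`b` is a `-` symbol. -/
def traceTerm (a b : Symb) (jk : ℕ × ℕ) : ℂ :=
  blockTerm a b jk - blockTerm a b jk.swap + cornerTerm a b jk

lemma summable_norm_Lmat_row (ha : CoeffDecay C σ a) (hσ₀ : 0 ≤ σ) (hσ₁ : σ < 1) (t : ℤ) :
    Summable fun n => ‖Lmat a t n‖ :=
  (((summable_pow_natAbs hσ₀ hσ₁).comp_injective (sub_right_injective : Injective (t - ·))).mul_left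
    C).of_nonneg_of_le (fun _ => norm_nonneg _) fun _ => ha _ _

lemma summable_diagTerm_row (ha : CoeffDecay C σ a) (hb : CoeffDecay C σ b) (hσ₀ : 0 ≤ σ)
    (hσ₁ : σ < 1) (t : ℤ) : Summable fun n => diagTerm a b t n :=
  .of_norm_bounded ((summable_norm_Lmat_row ha hσ₀ hσ₁ t).mul_right C) fun n => by
    rw [diagTerm, norm_mul]
    exact mul_le_mul_of_nonneg_left (hb.norm_le hσ₀ hσ₁.le _ _) (norm_nonneg _)

lemma summable_diagTerm_col (ha : CoeffDecay C σ a) (hb : CoeffDecay C σ b) (hσ₀ : 0 ≤ σ)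
    (hσ₁ : σ < 1) (t : ℤ) : Summable fun n => diagTerm a b n t :=
  .of_norm_bounded ((summable_norm_Lmat_row hb hσ₀ hσ₁ t).mul_left C) fun n => by
    rw [diagTerm, norm_mul]
    exact mul_le_mul_of_nonneg_right (ha.norm_le hσ₀ hσ₁.le _ _) (norm_nonneg _)

lemma Lmat_moyalBracket_self_eq_tsum_traceTerm (ha : CoeffDecay C σ a) (hb : CoeffDecay C σ b)
    (hσ₀ : 0 ≤ σ) (hσ₁ : σ < 1) (hbm : isMinus b) (j : ℕ) :
    Lmat (moyalBracket a b) (j + 1) (j + 1) = -I * ∑' k : ℕ, traceTerm a b (j, k) := by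
  have hrow := summable_diagTerm_row ha hb hσ₀ hσ₁ (j + 1)
  have hcol := summable_diagTerm_col ha hb hσ₀ hσ₁ (j + 1)
  have hcomm : ∑' n, Lmat b (j + 1) n * Lmat a n (j + 1) = ∑' n, diagTerm a b n (j + 1) :=
    tsum_congr fun n => mul_comm _ _
  rw [Lmat_moyalBracket ha hb hσ₀ hσ₁, hcomm]
  change -I * (∑' n, diagTerm a b (j + 1) n - _) = _
  rw [← hrow.tsum_sub hcol, tsum_int_eq_tsum_nat_add_one_add_neg (hrow.sub hcol)]
  congr 1
  refine tsum_congr fun k => ?_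
  have hzero : diagTerm a b (-k) (j + 1) = 0 := by
    rw [diagTerm, hbm _ _ (by omega), mul_zero]
  rw [hzero, sub_zero]
  rfl

lemma summable_norm_blockTerm (hb : CoeffDecay C σ b) (hσ₀ : 0 ≤ σ) (hσ₁ : σ < 1)
    (hT : Summable fun jk : ℕ × ℕ => ‖Tmat a (jk.1 + 1) (jk.2 + 1)‖) :
    Summable fun jk => ‖blockTerm a b jk‖ :=
  (hT.mul_right C).of_nonneg_of_le (fun _ => norm_nonneg _) fun jk => by
    rw [blockTerm, diagTerm, norm_mul]
    exact mul_le_mul (by simp [Tmat]) (hb.norm_le hσ₀ hσ₁.le _ _) (norm_nonneg _) (norm_nonneg _)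

lemma summable_norm_cornerTerm (ha : CoeffDecay C σ a) (hb : CoeffDecay C σ b) (hσ₀ : 0 ≤ σ)
    (hσ₁ : σ < 1) : Summable fun jk => ‖cornerTerm a b jk‖ := by
  have hgeom := summable_geometric_of_lt_one hσ₀ hσ₁
  refine (((hgeom.mul_of_nonneg hgeom (fun _ => by positivity) fun _ => by positivity).mul_left
    (C * C))).of_nonneg_of_le (fun _ => norm_nonneg _) fun jk => ?_
  have hexp : jk.1 + jk.2 ≤ ((jk.1 + 1 : ℤ) - -(jk.2 : ℤ)).natAbs := by omega
  rw [cornerTerm, diagTerm, norm_mul,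
    show C * C * (σ ^ jk.1 * σ ^ jk.2) = C * σ ^ (jk.1 + jk.2) * C by ring]
  refine mul_le_mul ((ha _ _).trans ?_) (hb.norm_le hσ₀ hσ₁.le _ _) (norm_nonneg _) ?_
  · exact mul_le_mul_of_nonneg_left (pow_le_pow_of_le_one hσ₀ hσ₁.le hexp) ha.nonneg
  · exact mul_nonneg ha.nonneg (by positivity)

lemma summable_norm_traceTerm (ha : CoeffDecay C σ a) (hb : CoeffDecay C σ b) (hσ₀ : 0 ≤ σ)
    (hσ₁ : σ < 1) (hT : Summable fun jk : ℕ × ℕ => ‖Tmat a (jk.1 + 1) (jk.2 + 1)‖) :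
    Summable fun jk => ‖traceTerm a b jk‖ := by
  have hU := summable_norm_blockTerm hb hσ₀ hσ₁ hT
  have hU' := (Equiv.prodComm ℕ ℕ).summable_iff.mpr hU
  refine ((hU.add hU').add (summable_norm_cornerTerm ha hb hσ₀ hσ₁)).of_nonneg_of_le
    (fun _ => norm_nonneg _) fun jk => ?_
  exact (norm_add_le _ _).trans (add_le_add_left (norm_sub_le _ _) _)

lemma tsum_traceTerm (ha : CoeffDecay C σ a) (hb : CoeffDecay C σ b) (hσ₀ : 0 ≤ σ)
    (hσ₁ : σ < 1) (hT : Summable fun jk : ℕ × ℕ => ‖Tmat a (jk.1 + 1) (jk.2 + 1)‖) :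
    ∑' jk, traceTerm a b jk = ∑' jk, cornerTerm a b jk := by
  have hU := (summable_norm_blockTerm hb hσ₀ hσ₁ hT).of_norm
  have hU' : Summable fun jk : ℕ × ℕ => blockTerm a b jk.swap :=
    (Equiv.prodComm ℕ ℕ).summable_iff.mpr hU
  have hW := (summable_norm_cornerTerm ha hb hσ₀ hσ₁).of_norm
  have hswap : ∑' jk : ℕ × ℕ, blockTerm a b jk.swap = ∑' jk, blockTerm a b jk :=
    (Equiv.prodComm ℕ ℕ).tsum_eq _
  unfold traceTerm
  rw [(hU.sub hU').tsum_add hW, hU.tsum_sub hU', hswap, sub_self, zero_add]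

theorem summable_and_tsum_Tmat_moyalBracket_diag (ha : CoeffDecay C σ a)
    (hb : CoeffDecay C σ b) (hσ₀ : 0 ≤ σ) (hσ₁ : σ < 1) (hbm : isMinus b)
    (hT : Summable fun jk : ℕ × ℕ => ‖Tmat a (jk.1 + 1) (jk.2 + 1)‖) :
    Summable (fun j : ℕ => ‖Tmat (moyalBracket a b) (j + 1) (j + 1)‖) ∧
      ∑' j : ℕ, Tmat (moyalBracket a b) (j + 1) (j + 1) = -I * ∑' jk, cornerTerm a b jk := by
  have hdiag (j : ℕ) :
      Tmat (moyalBracket a b) (j + 1) (j + 1) = -I * ∑' k : ℕ, traceTerm a b (j, k) := by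
    rw [Tmat, Nat.cast_succ]
    exact Lmat_moyalBracket_self_eq_tsum_traceTerm ha hb hσ₀ hσ₁ hbm j
  have hV := summable_norm_traceTerm ha hb hσ₀ hσ₁ hT
  refine ⟨hV.prod.of_nonneg_of_le (fun _ => norm_nonneg _) fun j => ?_, ?_⟩
  · rw [hdiag, norm_mul, norm_neg, norm_I, one_mul]
    exact norm_tsum_le_tsum_norm (hV.prod_factor j)
  · rw [tsum_congr hdiag, tsum_mul_left, ← hV.of_norm.tsum_prod, tsum_traceTerm ha hb hσ₀ hσ₁ hT]

lemma tsum_cornerTerm_eq_tsum_sum_Icc (hW : Summable (cornerTerm a b)) :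
    ∑' jk, cornerTerm a b jk =
      ∑' m : ℕ, ∑ j ∈ Finset.Icc 1 (m + 1),
        fCoef (a (2 * (j : ℤ) - ((m : ℤ) + 1))) ((m : ℤ) + 1) *
          fCoef (b (2 * (j : ℤ) - ((m : ℤ) + 1))) (-((m : ℤ) + 1)) := by
  rw [← (hasSum_sum_antidiagonal hW.hasSum).tsum_eq]
  refine tsum_congr fun m => Finset.sum_nbij' (fun p => p.1 + 1) (fun j => (j - 1, m + 1 - j))
    ?_ ?_ ?_ ?_ fun p hp => ?_
  · intro p hp
    simp only [Finset.HasAntidiagonal.mem_antidiagonal, Finset.mem_Icc] at hp ⊢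
    omega
  · intro j hj
    simp only [Finset.HasAntidiagonal.mem_antidiagonal, Finset.mem_Icc] at hj ⊢
    omega
  · intro p hp
    simp only [Finset.HasAntidiagonal.mem_antidiagonal] at hp
    exact Prod.ext (Nat.add_sub_cancel _ _) (by dsimp only; omega)
  · intro j hj
    simp only [Finset.mem_Icc] at hj
    omega
  · obtain rfl := Finset.HasAntidiagonal.mem_antidiagonal.mp hp
    simp only [cornerTerm, diagTerm, Lmat]
    push_cast
    ring_nf

end StarToeplitz

/-- **Trace identities for star-Toeplitz operators of Moyal brackets** (Lemma 3.11).
(i) The diagonal entries of `T({a₋,b₋}_M)` and `T({a₊,b₊}_M)` vanish.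
(ii) If the matrices of `T(a₊)` and `T(b₋)` are absolutely summable (trace class), then
`∑_j T_{j,j}({a₊,b₋}_M)` converges absolutely and equals
`-i ∑_{m≥1} ∑_{j=1}^m (a₊,_{j-m/2})_m (b₋,_{j-m/2})_{-m}`. -/
theorem star_toeplitz_moyal_trace
    (am bm ap bp : Symb)
    (hVam : memV am) (hVbm : memV bm) (hVap : memV ap) (hVbp : memV bp)
    (ham : isMinus am) (hbm : isMinus bm) (hap : isPlus ap) (hbp : isPlus bp) :
    (∀ j : ℕ, 1 ≤ j →
        Tmat (moyalBracket am bm) j j = 0 ∧ Tmat (moyalBracket ap bp) j j = 0) ∧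
    (Summable (fun jk : ℕ × ℕ => ‖Tmat ap (jk.1 + 1) (jk.2 + 1)‖) →
      Summable (fun jk : ℕ × ℕ => ‖Tmat bm (jk.1 + 1) (jk.2 + 1)‖) →
      Summable (fun j : ℕ => ‖Tmat (moyalBracket ap bm) (j + 1) (j + 1)‖) ∧
      (∑' j : ℕ, Tmat (moyalBracket ap bm) (j + 1) (j + 1)) =
        -Complex.I * ∑' m : ℕ, ∑ j ∈ Finset.Icc 1 (m + 1),
          fCoef (ap (2 * (j : ℤ) - ((m : ℤ) + 1))) ((m : ℤ) + 1) *
            fCoef (bm (2 * (j : ℤ) - ((m : ℤ) + 1))) (-((m : ℤ) + 1))) := by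
  obtain ⟨C₁, σ₁, hσ₁, ham', hbm'⟩ := StarToeplitz.exists_coeffDecay hVam hVbm
  obtain ⟨C₂, σ₂, hσ₂, hap', hbp'⟩ := StarToeplitz.exists_coeffDecay hVap hVbp
  obtain ⟨C, σ, hσ, hap'', hbm''⟩ := StarToeplitz.exists_coeffDecay hVap hVbm
  refine ⟨fun j _ => ⟨?_, ?_⟩, fun hT _ => ?_⟩
  · exact StarToeplitz.Lmat_moyalBracket_self_of_isMinus ham' hbm' hσ₁.1.le hσ₁.2 ham hbm j
  · exact StarToeplitz.Lmat_moyalBracket_self_of_isPlus hap' hbp' hσ₂.1.le hσ₂.2 hap hbp j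
  · obtain ⟨hsum, htrace⟩ :=
      StarToeplitz.summable_and_tsum_Tmat_moyalBracket_diag hap'' hbm'' hσ.1.le hσ.2 hbm hT
    rw [htrace, StarToeplitz.tsum_cornerTerm_eq_tsum_sum_Icc
      (StarToeplitz.summable_norm_cornerTerm hap'' hbm'' hσ.1.le hσ.2).of_norm]
    exact ⟨hsum, rfl⟩
end
end
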